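/- The product measure Pois(q₀) ⊗ Pois(k₂ q₀ / k₁) on ℕ² is stationary for the generator A f(q,p) = r q₀ [f(q+1,p)−f(q,p)] + r q [f(q−1,p)−f(q,p)] + k₂ q [f(q−1,p+1)−f(q,p)] + k₁ p [f(q+1,p−1)−f(q,p)]; i.e., for every bounded f: ℕ² → ℝ, the double sum Σ_{q,p} A f(q,p) · e^{−(λ_Q+λ_P)} λ_Q^q λ_P^p /(q! p!) equals 0, where λ_Q = q₀ and λ_P = k₂ q₀/k₁. -/

import Mathlib

open Real

/-!
The weight `w(q, p) = e^{-(a+b)} a^q b^p / (q! p!)` satisfies `(q+1) w(q+1, p) = a w(q, p)` and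
`(p+1) w(q, p+1) = b w(q, p)`. Shifting `q ↦ q + 1` in the exit term (whose coefficient `q`
kills the row `q = 0`) turns it into minus the input term; shifting `q ↦ q + 1` in the
detachment term and `p ↦ p + 1` in the reattachment term turns both into the same series
`k₂ q₀ Σ [f(q, p+1) - f(q+1, p)] w(q, p)` with opposite signs, by detailed balance
`k₁ λ_P = k₂ λ_Q`. All series involved converge absolutely because `f` is bounded.
-/

section Shift

variable {M : Type*} [AddCommMonoid M] [TopologicalSpace M] {g : ℕ × ℕ → M} {m : M}

theorem hasSum_comp_succ_fst_iff (h₀ : ∀ p, g (0, p) = 0) :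
    HasSum (fun x : ℕ × ℕ => g (x.1 + 1, x.2)) m ↔ HasSum g m := by
  refine (Prod.map_injective.2 ⟨Nat.succ_injective, Function.injective_id⟩).hasSum_iff ?_
  rintro ⟨_ | q, p⟩ hx
  · exact h₀ p
  · exact absurd ⟨(q, p), rfl⟩ hx

theorem hasSum_comp_succ_snd_iff (h₀ : ∀ q, g (q, 0) = 0) :
    HasSum (fun x : ℕ × ℕ => g (x.1, x.2 + 1)) m ↔ HasSum g m := by
  refine (Prod.map_injective.2 ⟨Function.injective_id, Nat.succ_injective⟩).hasSum_iff ?_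
  rintro ⟨q, _ | p⟩ hx
  · exact h₀ q
  · exact absurd ⟨(q, p), rfl⟩ hx

end Shift

noncomputable def prodPoissonWeight (a b : ℝ) (x : ℕ × ℕ) : ℝ :=
  exp (-(a + b)) * a ^ x.1 * b ^ x.2 / (x.1.factorial * x.2.factorial)

namespace prodPoissonWeight

variable (a b : ℝ)

theorem succ_fst (q p : ℕ) :
    ((q : ℝ) + 1) * prodPoissonWeight a b (q + 1, p) = a * prodPoissonWeight a b (q, p) := by
  simp only [prodPoissonWeight, Nat.factorial_succ, pow_succ]
  push_cast
  field_simp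

theorem succ_snd (q p : ℕ) :
    ((p : ℝ) + 1) * prodPoissonWeight a b (q, p + 1) = b * prodPoissonWeight a b (q, p) := by
  simp only [prodPoissonWeight, Nat.factorial_succ, pow_succ]
  push_cast
  field_simp

theorem summable_abs : Summable fun x => |prodPoissonWeight a b x| := by
  have h := (Real.summable_pow_div_factorial |a|).mul_of_nonneg
    (Real.summable_pow_div_factorial |b|) (fun _ => by positivity) (fun _ => by positivity)
  refine (h.mul_left (exp (-(a + b)))).congr fun x => ?_
  simp only [prodPoissonWeight, abs_div, abs_mul, abs_pow, abs_exp, Nat.abs_cast]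
  ring

theorem summable_mul_of_abs_le {h : ℕ × ℕ → ℝ} (C : ℝ) (hC : ∀ x, |h x| ≤ C) :
    Summable fun x => h x * prodPoissonWeight a b x :=
  .of_norm_bounded ((summable_abs a b).mul_left C) fun x => by
    rw [Real.norm_eq_abs, abs_mul]
    exact mul_le_mul_of_nonneg_right (hC x) (abs_nonneg _)

end prodPoissonWeight

theorem abs_mul_sub_le {f : ℕ → ℕ → ℝ} {C : ℝ} (hC : ∀ q p, |f q p| ≤ C) (c : ℝ)
    (q p q' p' : ℕ) : |c * (f q p - f q' p')| ≤ |c| * (C + C) := by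
  rw [abs_mul]
  exact mul_le_mul_of_nonneg_left ((abs_sub _ _).trans (add_le_add (hC q p) (hC q' p')))
    (abs_nonneg c)

theorem product_poisson_stationary_general
    (r q₀ k₁ k₂ : ℝ) (hk₁ : 0 < k₁)
    (f : ℕ → ℕ → ℝ) (hf : ∃ C, ∀ q p, |f q p| ≤ C) :
    ∑' qp : ℕ × ℕ,
        (r * q₀ * (f (qp.1 + 1) qp.2 - f qp.1 qp.2)
          + r * qp.1 * (f (qp.1 - 1) qp.2 - f qp.1 qp.2)
          + k₂ * qp.1 * (f (qp.1 - 1) (qp.2 + 1) - f qp.1 qp.2)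
          + k₁ * qp.2 * (f (qp.1 + 1) (qp.2 - 1) - f qp.1 qp.2))
        * (exp (-(q₀ + k₂ * q₀ / k₁)) * q₀ ^ qp.1 * (k₂ * q₀ / k₁) ^ qp.2
            / (Nat.factorial qp.1 * Nat.factorial qp.2))
      = 0 := by
  obtain ⟨C, hC⟩ := hf
  set Λ := k₂ * q₀ / k₁
  set w := prodPoissonWeight q₀ Λ
  have balance : k₁ * Λ = k₂ * q₀ := by simp only [Λ]; field_simp
  obtain ⟨s, input⟩ := prodPoissonWeight.summable_mul_of_abs_le q₀ Λ _
    fun x => abs_mul_sub_le hC (r * q₀) (x.1 + 1) x.2 x.1 x.2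
  obtain ⟨t, flux⟩ := prodPoissonWeight.summable_mul_of_abs_le q₀ Λ _
    fun x => abs_mul_sub_le hC (k₂ * q₀) x.1 (x.2 + 1) (x.1 + 1) x.2
  have exit : HasSum (fun x => r * x.1 * (f (x.1 - 1) x.2 - f x.1 x.2) * w x) (-s) := by
    refine (hasSum_comp_succ_fst_iff (by simp)).1 (input.neg.congr_fun fun ⟨q, p⟩ => ?_)
    simp only [Nat.add_sub_cancel, Nat.cast_add, Nat.cast_one]
    linear_combination r * (f q p - f (q + 1) p) * prodPoissonWeight.succ_fst q₀ Λ q p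
  have detach : HasSum (fun x => k₂ * x.1 * (f (x.1 - 1) (x.2 + 1) - f x.1 x.2) * w x) t := by
    refine (hasSum_comp_succ_fst_iff (by simp)).1 (flux.congr_fun fun ⟨q, p⟩ => ?_)
    simp only [Nat.add_sub_cancel, Nat.cast_add, Nat.cast_one]
    linear_combination k₂ * (f q (p + 1) - f (q + 1) p) * prodPoissonWeight.succ_fst q₀ Λ q p
  have attach : HasSum (fun x => k₁ * x.2 * (f (x.1 + 1) (x.2 - 1) - f x.1 x.2) * w x) (-t) := by
    refine (hasSum_comp_succ_snd_iff (by simp)).1 (flux.neg.congr_fun fun ⟨q, p⟩ => ?_)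
    simp only [Nat.add_sub_cancel, Nat.cast_add, Nat.cast_one]
    linear_combination k₁ * (f (q + 1) p - f q (p + 1)) * prodPoissonWeight.succ_snd q₀ Λ q p
      + (f (q + 1) p - f q (p + 1)) * w (q, p) * balance
  convert (((input.add exit).add detach).add attach).tsum_eq using 1
  · exact tsum_congr fun x => by simp only [w, prodPoissonWeight]; ring
  · ring

/-- The product measure `Pois(q₀) ⊗ Pois(k₂ q₀/k₁)` on `ℕ²` is stationary
for the one-compartment generator
`A f(q,p) = r q₀ [f(q+1,p)−f(q,p)] + r q [f(q−1,p)−f(q,p)]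
          + k₂ q [f(q−1,p+1)−f(q,p)] + k₁ p [f(q+1,p−1)−f(q,p)]`:
for every bounded `f : ℕ² → ℝ`,
`Σ_{q,p} A f(q,p) · e^{−(λ_Q+λ_P)} λ_Q^q λ_P^p/(q! p!) = 0`, where `λ_Q = q₀` and
`λ_P = k₂ q₀/k₁`.  (Natural subtraction `q−1` at `q = 0` is harmless since that term
carries the factor `q = 0`.) -/
theorem product_poisson_stationary
    (r q₀ k₁ k₂ : ℝ) (hr : 0 < r) (hq₀ : 0 < q₀) (hk₁ : 0 < k₁) (hk₂ : 0 < k₂)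
    (f : ℕ → ℕ → ℝ) (hf : ∃ C, ∀ q p, |f q p| ≤ C) :
    ∑' qp : ℕ × ℕ,
        (r * q₀ * (f (qp.1 + 1) qp.2 - f qp.1 qp.2)
          + r * qp.1 * (f (qp.1 - 1) qp.2 - f qp.1 qp.2)
          + k₂ * qp.1 * (f (qp.1 - 1) (qp.2 + 1) - f qp.1 qp.2)
          + k₁ * qp.2 * (f (qp.1 + 1) (qp.2 - 1) - f qp.1 qp.2))
        * (exp (-(q₀ + k₂ * q₀ / k₁)) * q₀ ^ qp.1 * (k₂ * q₀ / k₁) ^ qp.2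
            / (Nat.factorial qp.1 * Nat.factorial qp.2))
      = 0 :=
  product_poisson_stationary_general r q₀ k₁ k₂ hk₁ f hf
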